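/- Let D be a bounded domain in ℝ³ such that for every continuous function f on ∂D there exists a function continuous on the closure of D, harmonic in D, and equal to f on ∂D (a Dirichlet domain), and let u : closure(D) → ℝ be continuous on the closure of D and C² in D. Fix μ > 0 and suppose there is r* > 0 with D_{r*} ≠ ∅ such that for every r ∈ (0, r*) the spherical mean M(·, r, u) satisfies ∇²M(·, r, u) − μ²M(·, r, u) = 0 in D_r. Then u satisfies ∇²u − μ²u = 0 in D. -/

import Mathlib

open MeasureTheory Metric

/-- The spherical mean `M(x, r, u) = (1/ω_m) ∫_{S_1(0)} u(x + r y) dS_y`,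
realized as the average of `y ↦ u (x + r • y)` over the unit sphere with respect to
the `(m-1)`-dimensional Hausdorff (surface-area) measure. -/
noncomputable def sphereMean (m : ℕ) (u : EuclideanSpace ℝ (Fin m) → ℝ)
    (x : EuclideanSpace ℝ (Fin m)) (r : ℝ) : ℝ :=
  ⨍ y in sphere (0 : EuclideanSpace ℝ (Fin m)) 1, u (x + r • y) ∂μH[(m : ℝ) - 1]

/-- The iterated spherical mean
`I(x, r', r, u) = (1/ω_m²) ∫_{S_1(0)} ∫_{S_1(0)} u(x + r' y + r z) dS_z dS_y`. -/
noncomputable def iterSphereMean (m : ℕ) (u : EuclideanSpace ℝ (Fin m) → ℝ)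
    (x : EuclideanSpace ℝ (Fin m)) (r' r : ℝ) : ℝ :=
  ⨍ y in sphere (0 : EuclideanSpace ℝ (Fin m)) 1,
    ⨍ z in sphere (0 : EuclideanSpace ℝ (Fin m)) 1,
      u (x + r' • y + r • z) ∂μH[(m : ℝ) - 1] ∂μH[(m : ℝ) - 1]

/-- The Laplacian `∇²u (x) = ∑ i ∂²u/∂x_i² (x)`. -/
noncomputable def laplacian (m : ℕ) (u : EuclideanSpace ℝ (Fin m) → ℝ)
    (x : EuclideanSpace ℝ (Fin m)) : ℝ :=
  ∑ i : Fin m, fderiv ℝ (fun y => fderiv ℝ u y (EuclideanSpace.single i 1)) x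
    (EuclideanSpace.single i 1)

/-!
Write the spherical mean as `M(x, r, u) = ∫ u (x + r • y) dσ(y)` for the normalized surface
measure `σ` on the unit sphere. Differentiating twice under the integral sign gives
`∇² M(·, r, u) = M(·, r, ∇²u)`, so the hypothesis says `M(x, r, ∇²u - μ² u) = 0` for all small
`r > 0`. Since `σ` is a probability measure (the unit sphere has positive finite
`(n-1)`-dimensional Hausdorff measure: bound it by stereographic charts from above and by an
orthogonal projection onto a hyperplane from below), `M(x, r, f) → f x` as `r → 0` for `f`
continuous at `x`; applied to `f = ∇²u - μ² u` this gives `∇²u x - μ² u x = 0`.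
-/

open Module Filter Topology
open scoped RealInnerProductSpace ENNReal

section SphereMeasure

variable {E : Type*} [NormedAddCommGroup E] [InnerProductSpace ℝ E] [FiniteDimensional ℝ E]

lemma cast_finrank_orthogonal_span_singleton {v : E} (hv : v ≠ 0) :
    (finrank ℝ (ℝ ∙ v)ᗮ : ℝ) = finrank ℝ E - 1 := by
  have h := (ℝ ∙ v).finrank_add_finrank_orthogonal
  rw [finrank_span_singleton hv] at h
  rw [← h]
  push_cast
  ring

variable [MeasurableSpace E] [BorelSpace E]

lemma hausdorffMeasure_hemisphere_lt_top {v : E} (hv : ‖v‖ = 1) :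
    μH[finrank ℝ (ℝ ∙ v)ᗮ] {x ∈ sphere (0 : E) 1 | ⟪v, x⟫ ≤ 0} < ∞ := by
  set K := (ℝ ∙ v)ᗮ
  obtain ⟨L, hL⟩ : ∃ L, LipschitzOnWith L (stereoInvFunAux v ∘ ((↑) : K → E)) (closedBall 0 2) :=
    (contDiff_stereoInvFunAux.comp K.subtypeL.contDiff).locallyLipschitz.locallyLipschitzOn
      |>.exists_lipschitzOnWith_of_compact (isCompact_closedBall 0 2)
  have hcover : {x ∈ sphere (0 : E) 1 | ⟪v, x⟫ ≤ 0} ⊆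
      (stereoInvFunAux v ∘ ((↑) : K → E)) '' closedBall 0 2 := by
    rintro x ⟨hx, hvx⟩
    have hxv : x ≠ v := by
      rintro rfl
      rw [real_inner_self_eq_norm_sq, hv] at hvx
      norm_num at hvx
    refine ⟨stereoToFun v x, ?_, congrArg Subtype.val (stereo_left_inv hv (x := ⟨x, hx⟩) hxv)⟩
    have hP : ‖K.orthogonalProjectionOnto x‖ ≤ 1 :=
      (K.norm_orthogonalProjectionOnto_apply_le x).trans (mem_sphere_zero_iff_norm.mp hx).le
    have hcoef : 0 ≤ 2 / (1 - ⟪v, x⟫) ∧ 2 / (1 - ⟪v, x⟫) ≤ 2 :=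
      ⟨by apply div_nonneg <;> linarith, div_le_self (by norm_num) (by linarith)⟩
    rw [mem_closedBall_zero_iff, stereoToFun_apply, norm_smul, Real.norm_eq_abs,
      innerSL_apply_apply, abs_of_nonneg hcoef.1]
    nlinarith [norm_nonneg (K.orthogonalProjectionOnto x)]
  refine (measure_mono hcover).trans_lt
    ((hL.hausdorffMeasure_image_le (Nat.cast_nonneg _)).trans_lt ?_)
  exact ENNReal.mul_lt_top (by simp) (isCompact_closedBall _ _).measure_lt_top

variable [Nontrivial E]

lemma hausdorffMeasure_sphere_ne_top : μH[finrank ℝ E - 1] (sphere (0 : E) 1) ≠ ∞ := by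
  obtain ⟨v, hv⟩ := exists_norm_eq E zero_le_one
  have hv0 : v ≠ 0 := norm_ne_zero_iff.mp (by rw [hv]; exact one_ne_zero)
  have hsplit : sphere (0 : E) 1 ⊆
      {x ∈ sphere (0 : E) 1 | ⟪v, x⟫ ≤ 0} ∪ {x ∈ sphere (0 : E) 1 | ⟪-v, x⟫ ≤ 0} := by
    intro x hx
    rcases le_total ⟪v, x⟫ 0 with h | h
    · exact .inl ⟨hx, h⟩
    · exact .inr ⟨hx, by rw [inner_neg_left]; linarith⟩
  refine ((measure_mono hsplit).trans (measure_union_le _ _)).trans_lt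
    (ENNReal.add_lt_top.mpr ⟨?_, ?_⟩) |>.ne
  · rw [← cast_finrank_orthogonal_span_singleton hv0]
    exact hausdorffMeasure_hemisphere_lt_top hv
  · rw [← cast_finrank_orthogonal_span_singleton (neg_ne_zero.mpr hv0)]
    exact hausdorffMeasure_hemisphere_lt_top (by rwa [norm_neg])

lemma hausdorffMeasure_sphere_ne_zero : μH[finrank ℝ E - 1] (sphere (0 : E) 1) ≠ 0 := by
  obtain ⟨v, hv⟩ := exists_norm_eq E zero_le_one
  have hv0 : v ≠ 0 := norm_ne_zero_iff.mp (by rw [hv]; exact one_ne_zero)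
  set K := (ℝ ∙ v)ᗮ
  have hball : ball (0 : K) 1 ⊆ K.orthogonalProjectionOnto '' sphere (0 : E) 1 := by
    intro k hk
    rw [mem_ball_zero_iff] at hk
    refine ⟨k + √(1 - ‖k‖ ^ 2) • v, ?_, ?_⟩
    · have hkv : ⟪(k : E), v⟫ = 0 :=
        Submodule.mem_orthogonal_singleton_iff_inner_left.mp k.2
      rw [mem_sphere_zero_iff_norm, ← sq_eq_sq₀ (norm_nonneg _) zero_le_one, norm_add_sq_real,
        inner_smul_right, hkv, norm_smul, Real.norm_eq_abs, abs_of_nonneg (Real.sqrt_nonneg _), hv,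
        mul_pow, Real.sq_sqrt (by nlinarith [norm_nonneg k])]
      simp
    · rw [map_add, map_smul, Submodule.orthogonalProjectionOnto_mem_subspace_eq_self,
        Submodule.orthogonalProjectionOnto_orthogonalComplement_singleton_eq_zero, smul_zero,
        add_zero]
  rw [← cast_finrank_orthogonal_span_singleton hv0, ← pos_iff_ne_zero]
  calc (0 : ℝ≥0∞) < μH[finrank ℝ K] (ball (0 : K) 1) := measure_ball_pos _ _ one_pos
    _ ≤ μH[finrank ℝ K] (K.orthogonalProjectionOnto '' sphere (0 : E) 1) := measure_mono hball
    _ ≤ μH[finrank ℝ K] (sphere (0 : E) 1) :=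
      hausdorffMeasure_orthogonalProjectionOnto_le K _ _ (Nat.cast_nonneg _)

lemma isProbabilityMeasure_cond_sphere :
    IsProbabilityMeasure (ProbabilityTheory.cond μH[finrank ℝ E - 1] (sphere (0 : E) 1)) :=
  ProbabilityTheory.cond_isProbabilityMeasure_of_finite hausdorffMeasure_sphere_ne_zero
    hausdorffMeasure_sphere_ne_top

end SphereMeasure

section TranslatedIntegral

variable {E F : Type*} [NormedAddCommGroup E] [NormedSpace ℝ E] [NormedAddCommGroup F]
  {D S : Set E} {g : E → F} {x : E} {r : ℝ}

lemma eventually_forall_add_smul_mem (hD : IsOpen D) (hS : IsCompact S)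
    (hx : ∀ y ∈ S, x + r • y ∈ D) :
    ∀ᶠ p : E × ℝ in 𝓝 (x, r), ∀ y ∈ S, p.1 + p.2 • y ∈ D :=
  hS.eventually_forall_of_forall_eventually fun y hy =>
    (by fun_prop : Continuous fun q : (E × ℝ) × E => q.1.1 + q.1.2 • q.2).continuousAt
      |>.preimage_mem_nhds (hD.mem_nhds (hx y hy))

lemma exists_eventually_forall_norm_comp_add_smul_le (hD : IsOpen D) (hg : ContinuousOn g D)
    (hS : IsCompact S) (hx : ∀ y ∈ S, x + r • y ∈ D) :
    ∃ C, ∀ᶠ p : E × ℝ in 𝓝 (x, r), ∀ y ∈ S, ‖g (p.1 + p.2 • y)‖ ≤ C := by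
  obtain ⟨C, hC⟩ := hS.exists_bound_of_continuousOn
    (hg.comp (by fun_prop : Continuous fun y : E => x + r • y).continuousOn hx)
  refine ⟨C + 1, hS.eventually_forall_of_forall_eventually fun y hy => ?_⟩
  have hgq : ContinuousAt (fun q : (E × ℝ) × E => ‖g (q.1.1 + q.1.2 • q.2)‖) ((x, r), y) :=
    ContinuousAt.comp (g := fun z => ‖g z‖) (f := fun q : (E × ℝ) × E => q.1.1 + q.1.2 • q.2)
      (hg.continuousAt (hD.mem_nhds (hx y hy))).norm (by fun_prop)
  filter_upwards [hgq.eventually (gt_mem_nhds (lt_add_one _))] with q hq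
  exact hq.le.trans (by simpa using hC y hy)

variable [MeasurableSpace E] [OpensMeasurableSpace E] {ν : Measure E}

lemma integrable_comp_add_smul [IsFiniteMeasure ν] (hS : IsCompact S) (hνS : ∀ᵐ y ∂ν, y ∈ S)
    (hg : ContinuousOn g D) (hx : ∀ y ∈ S, x + r • y ∈ D) :
    Integrable (fun y => g (x + r • y)) ν := by
  rw [← Measure.restrict_eq_self_of_ae_mem hνS]
  exact ContinuousOn.integrableOn_compact hS
    (hg.comp (by fun_prop : Continuous fun y : E => x + r • y).continuousOn hx)

variable [NormedSpace ℝ F]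

lemma hasFDerivAt_integral_comp_add_smul [CompleteSpace F] [IsFiniteMeasure ν]
    {g' : E → E →L[ℝ] F} (hD : IsOpen D) (hg : ∀ z ∈ D, HasFDerivAt g (g' z) z)
    (hg' : ContinuousOn g' D) (hS : IsCompact S) (hνS : ∀ᵐ y ∂ν, y ∈ S) (hx : ∀ y ∈ S, x + r • y ∈ D) :
    HasFDerivAt (fun w => ∫ y, g (w + r • y) ∂ν) (∫ y, g' (x + r • y) ∂ν) x := by
  obtain ⟨C, hC⟩ := exists_eventually_forall_norm_comp_add_smul_le hD hg' hS hx
  have hgD : ContinuousOn g D := fun z hz => (hg z hz).continuousAt.continuousWithinAt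
  have hnear : ∀ᶠ w in 𝓝 x, ∀ y ∈ S, w + r • y ∈ D ∧ ‖g' (w + r • y)‖ ≤ C := by
    have hw := (Continuous.prodMk_left r).tendsto x
    filter_upwards [hw.eventually (eventually_forall_add_smul_mem hD hS hx), hw.eventually hC]
      with w hwD hwC y hy
    exact ⟨hwD y hy, hwC y hy⟩
  refine hasFDerivAt_integral_of_dominated_of_fderiv_le (bound := fun _ => C) hnear
    (hnear.mono fun w hw => (integrable_comp_add_smul hS hνS hgD fun y hy => (hw y hy).1).1)
    (integrable_comp_add_smul hS hνS hgD hx)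
    (integrable_comp_add_smul hS hνS hg' hx).1
    (hνS.mono fun y hy w hw => (hw y hy).2) (integrable_const C)
    (hνS.mono fun y hy w hw => ?_)
  simpa [Function.comp_def] using
    (hg _ (hw y hy).1).comp w ((hasFDerivAt_id w).add_const (r • y))

lemma tendsto_integral_comp_add_smul [CompleteSpace F] [IsProbabilityMeasure ν] (hD : IsOpen D)
    (hg : ContinuousOn g D) (hx : x ∈ D) (hS : IsCompact S) (hνS : ∀ᵐ y ∂ν, y ∈ S) :
    Tendsto (fun r : ℝ => ∫ y, g (x + r • y) ∂ν) (𝓝 0) (𝓝 (g x)) := by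
  have hx₀ : ∀ y ∈ S, x + (0 : ℝ) • y ∈ D := by simpa using fun _ _ => hx
  obtain ⟨C, hC⟩ := exists_eventually_forall_norm_comp_add_smul_le hD hg hS hx₀
  have hnear : ∀ᶠ r : ℝ in 𝓝 0, ∀ y ∈ S, x + r • y ∈ D ∧ ‖g (x + r • y)‖ ≤ C := by
    have hr := (Continuous.prodMk_right x).tendsto (0 : ℝ)
    filter_upwards [hr.eventually (eventually_forall_add_smul_mem hD hS hx₀), hr.eventually hC]
      with r hrD hrC y hy
    exact ⟨hrD y hy, hrC y hy⟩
  have hlim := tendsto_integral_filter_of_dominated_convergence (fun _ => C)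
    (hnear.mono fun r hr => (integrable_comp_add_smul hS hνS hg fun y hy => (hr y hy).1).1)
    (hnear.mono fun r hr => hνS.mono fun y hy => (hr y hy).2) (integrable_const C)
    (ae_of_all _ fun y => ((hg.continuousAt (hD.mem_nhds hx)).comp_of_eq
      (by fun_prop : Continuous fun r : ℝ => x + r • y).continuousAt (by simp)).tendsto)
  simpa using hlim

end TranslatedIntegral

section Laplacian

variable {m : ℕ}

noncomputable def bilinTrace (m : ℕ) :
    (EuclideanSpace ℝ (Fin m) →L[ℝ] EuclideanSpace ℝ (Fin m) →L[ℝ] ℝ) →L[ℝ] ℝ :=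
  ∑ i : Fin m, (ContinuousLinearMap.apply ℝ ℝ (EuclideanSpace.single i 1)).comp
    (ContinuousLinearMap.apply ℝ _ (EuclideanSpace.single i 1))

lemma laplacian_eq_bilinTrace {u : EuclideanSpace ℝ (Fin m) → ℝ} {x : EuclideanSpace ℝ (Fin m)}
    (hu : DifferentiableAt ℝ (fderiv ℝ u) x) :
    laplacian m u x = bilinTrace m (fderiv ℝ (fderiv ℝ u) x) := by
  simp [laplacian, bilinTrace, fderiv_clm_apply hu (differentiableAt_const _)]

lemma ContDiffOn.continuousOn_laplacian {D : Set (EuclideanSpace ℝ (Fin m))}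
    {u : EuclideanSpace ℝ (Fin m) → ℝ} (hu : ContDiffOn ℝ 2 u D) (hD : IsOpen D) :
    ContinuousOn (laplacian m u) D := by
  have hu' : ContDiffOn ℝ 1 (fderiv ℝ u) D := hu.fderiv_of_isOpen hD (by norm_num)
  refine ((bilinTrace m).continuous.comp_continuousOn
    (hu'.continuousOn_fderiv_of_isOpen hD le_rfl)).congr fun z hz => ?_
  exact laplacian_eq_bilinTrace ((hu'.differentiableOn one_ne_zero).differentiableAt
    (hD.mem_nhds hz))

lemma laplacian_integral_comp_add_smul {D S : Set (EuclideanSpace ℝ (Fin m))}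
    {u : EuclideanSpace ℝ (Fin m) → ℝ} {ν : Measure (EuclideanSpace ℝ (Fin m))}
    [IsFiniteMeasure ν] {x : EuclideanSpace ℝ (Fin m)} {r : ℝ} (hD : IsOpen D)
    (hu : ContDiffOn ℝ 2 u D) (hS : IsCompact S) (hνS : ∀ᵐ y ∂ν, y ∈ S)
    (hx : ∀ y ∈ S, x + r • y ∈ D) :
    laplacian m (fun w => ∫ y, u (w + r • y) ∂ν) x = ∫ y, laplacian m u (x + r • y) ∂ν := by
  have hu' : ContDiffOn ℝ 1 (fderiv ℝ u) D := hu.fderiv_of_isOpen hD (by norm_num)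
  have hdu : ∀ z ∈ D, HasFDerivAt u (fderiv ℝ u z) z := fun z hz =>
    ((hu.differentiableOn (by norm_num)).differentiableAt (hD.mem_nhds hz)).hasFDerivAt
  have hddu : ∀ z ∈ D, HasFDerivAt (fderiv ℝ u) (fderiv ℝ (fderiv ℝ u) z) z := fun z hz =>
    ((hu'.differentiableOn one_ne_zero).differentiableAt (hD.mem_nhds hz)).hasFDerivAt
  have hcont'' := hu'.continuousOn_fderiv_of_isOpen hD le_rfl
  have hfirst : fderiv ℝ (fun w => ∫ y, u (w + r • y) ∂ν) =ᶠ[𝓝 x]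
      fun w => ∫ y, fderiv ℝ u (w + r • y) ∂ν :=
    ((Continuous.prodMk_left r).tendsto x).eventually (eventually_forall_add_smul_mem hD hS hx)
      |>.mono fun w hw =>
        (hasFDerivAt_integral_comp_add_smul hD hdu hu'.continuousOn hS hνS hw).fderiv
  have hsecond := hasFDerivAt_integral_comp_add_smul hD hddu hcont'' hS hνS hx
  calc laplacian m (fun w => ∫ y, u (w + r • y) ∂ν) x
      = bilinTrace m (fderiv ℝ (fderiv ℝ fun w => ∫ y, u (w + r • y) ∂ν) x) :=
        laplacian_eq_bilinTrace (hsecond.differentiableAt.congr_of_eventuallyEq hfirst)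
    _ = bilinTrace m (∫ y, fderiv ℝ (fderiv ℝ u) (x + r • y) ∂ν) := by
        rw [hfirst.fderiv_eq, hsecond.fderiv]
    _ = ∫ y, bilinTrace m (fderiv ℝ (fderiv ℝ u) (x + r • y)) ∂ν :=
        ((bilinTrace m).integral_comp_comm (integrable_comp_add_smul hS hνS hcont'' hx)).symm
    _ = ∫ y, laplacian m u (x + r • y) ∂ν := integral_congr_ae <| hνS.mono fun y hy =>
        (laplacian_eq_bilinTrace (hddu _ (hx y hy)).differentiableAt).symm

lemma sphereMean_eq_integral (u : EuclideanSpace ℝ (Fin m) → ℝ) (x : EuclideanSpace ℝ (Fin m))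
    (r : ℝ) : sphereMean m u x r =
      ∫ y, u (x + r • y) ∂(ProbabilityTheory.cond μH[(m : ℝ) - 1] (sphere 0 1)) := by
  simp [sphereMean, average, ProbabilityTheory.cond]

lemma laplacian_sphereMean {D : Set (EuclideanSpace ℝ (Fin m))}
    {u : EuclideanSpace ℝ (Fin m) → ℝ} {x : EuclideanSpace ℝ (Fin m)} {r : ℝ} (hD : IsOpen D)
    (hu : ContDiffOn ℝ 2 u D) (hx : sphere x |r| ⊆ D) :
    laplacian m (fun w => sphereMean m u w r) x = sphereMean m (laplacian m u) x r := by
  simp only [sphereMean_eq_integral]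
  refine laplacian_integral_comp_add_smul hD hu (isCompact_sphere 0 1)
    (ProbabilityTheory.ae_cond_mem isClosed_sphere.measurableSet) fun y hy => hx ?_
  simp_all [norm_smul]

lemma tendsto_sphereMean [NeZero m] {D : Set (EuclideanSpace ℝ (Fin m))}
    {f : EuclideanSpace ℝ (Fin m) → ℝ} {x : EuclideanSpace ℝ (Fin m)} (hD : IsOpen D)
    (hf : ContinuousOn f D) (hx : x ∈ D) :
    Tendsto (fun r => sphereMean m f x r) (𝓝 0) (𝓝 (f x)) := by
  have := isProbabilityMeasure_cond_sphere (E := EuclideanSpace ℝ (Fin m))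
  rw [finrank_euclideanSpace_fin] at this
  simpa only [sphereMean_eq_integral] using tendsto_integral_comp_add_smul hD hf hx
    (isCompact_sphere 0 1) (ProbabilityTheory.ae_cond_mem isClosed_sphere.measurableSet)

end Laplacian

theorem stmt_14_general (D : Set (EuclideanSpace ℝ (Fin 3)))
    (hD_open : IsOpen D)
    (u : EuclideanSpace ℝ (Fin 3) → ℝ)
    (hu_C2 : ContDiffOn ℝ 2 u D)
    (μ : ℝ)
    (rstar : ℝ) (hrstar : 0 < rstar)
    (hmeans : ∀ r ∈ Set.Ioo 0 rstar, ∀ x ∈ {x ∈ D | closedBall x r ⊆ D},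
      laplacian 3 (fun x => sphereMean 3 u x r) x - μ ^ 2 * sphereMean 3 u x r = 0) :
    ∀ x ∈ D, laplacian 3 u x - μ ^ 2 * u x = 0 := by
  intro x hx
  have hlim : Tendsto (fun r => sphereMean 3 (laplacian 3 u) x r - μ ^ 2 * sphereMean 3 u x r)
      (𝓝[>] 0) (𝓝 (laplacian 3 u x - μ ^ 2 * u x)) :=
    ((tendsto_sphereMean hD_open (hu_C2.continuousOn_laplacian hD_open) hx).sub
      ((tendsto_sphereMean hD_open hu_C2.continuousOn hx).const_mul _)).mono_left
      nhdsWithin_le_nhds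
  have hzero : ∀ᶠ r in 𝓝[>] 0,
      sphereMean 3 (laplacian 3 u) x r - μ ^ 2 * sphereMean 3 u x r = 0 := by
    filter_upwards [Ioo_mem_nhdsGT hrstar,
      nhdsWithin_le_nhds (eventually_closedBall_subset (hD_open.mem_nhds hx))] with r hr hball
    rw [← laplacian_sphereMean hD_open hu_C2
      (sphere_subset_closedBall.trans (by rwa [abs_of_pos hr.1]))]
    exact hmeans r hr x ⟨hx, hball⟩
  exact tendsto_nhds_unique hlim (tendsto_const_nhds.congr' (hzero.mono fun _ h => h.symm))

/-- Analogue of the main theorem for panharmonic functions: if in a Dirichlet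
domain `D ⊆ ℝ³` all spherical means `M(·, r, u)`, `r ∈ (0, r*)`, satisfy
`∇²M − μ²M = 0` in `D_r`, then `u` satisfies `∇²u − μ²u = 0` in `D`. -/
theorem stmt_14 (D : Set (EuclideanSpace ℝ (Fin 3)))
    (hD_open : IsOpen D) (hD_conn : IsConnected D)
    (hD_bdd : Bornology.IsBounded D)
    (hDirichlet : ∀ f : EuclideanSpace ℝ (Fin 3) → ℝ, ContinuousOn f (frontier D) →
      ∃ w : EuclideanSpace ℝ (Fin 3) → ℝ, ContinuousOn w (closure D) ∧
        ContDiffOn ℝ 2 w D ∧ (∀ x ∈ D, laplacian 3 w x = 0) ∧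
        Set.EqOn w f (frontier D))
    (u : EuclideanSpace ℝ (Fin 3) → ℝ)
    (hu_cont : ContinuousOn u (closure D))
    (hu_C2 : ContDiffOn ℝ 2 u D)
    (μ : ℝ) (hμ : 0 < μ)
    (rstar : ℝ) (hrstar : 0 < rstar)
    (hDrstar : {x ∈ D | closedBall x rstar ⊆ D}.Nonempty)
    (hmeans : ∀ r ∈ Set.Ioo 0 rstar, ∀ x ∈ {x ∈ D | closedBall x r ⊆ D},
      laplacian 3 (fun x => sphereMean 3 u x r) x - μ ^ 2 * sphereMean 3 u x r = 0) :
    ∀ x ∈ D, laplacian 3 u x - μ ^ 2 * u x = 0 :=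
  stmt_14_general D hD_open u hu_C2 μ rstar hrstar hmeans
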